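/- Define f : ℤ → ℚ by f(−1) = 1/3, f(0) = 1, f(1) = 4, and f(m) = 4f(m−1) − f(m−2) + 3f(m−3) for all m ≥ 2. Then for every m ≥ 1, f(m) equals the cardinality of the NS-LOCO code NSC(m). -/

import Mathlib

/-!
Let `a n` count the words of length `n` over an alphabet of size `k` avoiding the factor `s t s`
(`s ≠ t`), and `b n` those words `w` for which `s w` still avoids it. Splitting on the first letter
gives `a (n + 1) = (k - 1) a n + b n`; splitting the words of length `n + 2` on whether they begin
with `t s` gives `a (n + 2) = b (n + 2) + b n`, because `t s w` avoids the factor iff `s w` does.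
Eliminating `b` yields `a (n + 3) + a (n + 1) = k a (n + 2) + (k - 1) a n`, which for `k = 4` is the
recurrence of `f`. The initial values agree: `a n = 4 ^ n` for `n < 3`, and the recurrence at
`m = 2` gives `f 2 = 16`.
-/

/-- The NS-LOCO code: words of length `m` over the alphabet `{0,1,2,3}`
(position `m-1` most significant) containing no contiguous subword `3 0 3`. -/
def NSC (m : ℕ) : Set (Fin m → Fin 4) :=
  {c | ∀ i : ℕ, ∀ h : i + 2 < m,
      ¬(c ⟨i + 2, h⟩ = 3 ∧ c ⟨i + 1, by omega⟩ = 0 ∧ c ⟨i, by omega⟩ = 3)}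

theorem List.cons_infix_cons_of_ne {α : Type*} {a x : α} {u l : List α} (h : x ≠ a) :
    a :: u <:+: x :: l ↔ a :: u <:+: l := by
  simp [List.infix_cons_iff, Ne.symm h]

theorem triple_infix_ofFn_iff {α : Type*} {n : ℕ} (w : Fin n → α) (a b c : α) :
    [a, b, c] <:+: List.ofFn w ↔ ∃ i, ∃ h : i + 2 < n,
      w ⟨i, by omega⟩ = a ∧ w ⟨i + 1, by omega⟩ = b ∧ w ⟨i + 2, h⟩ = c := by
  rw [List.infix_iff_getElem?]
  simp only [List.length_cons, List.length_nil, List.length_ofFn, List.getElem?_ofFn]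
  constructor
  · rintro ⟨k, hk, h⟩
    obtain ⟨_, h0⟩ := by simpa using h 0 (by simp)
    obtain ⟨_, h1⟩ := by simpa [Nat.add_comm] using h 1 (by simp)
    obtain ⟨_, h2⟩ := by simpa [Nat.add_comm] using h 2 (by simp)
    exact ⟨k, by omega, h0, h1, h2⟩
  · rintro ⟨i, hi, h⟩
    refine ⟨i, by omega, fun j hj => ?_⟩
    interval_cases j <;> simp [Nat.add_comm, hi, show i + 1 < n by omega, show i < n by omega, h]

section WordCount

variable {α : Type*}

noncomputable def wordCount (n : ℕ) (p : List α → Prop) : ℕ :=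
  {w : Fin n → α | p (List.ofFn w)}.ncard

theorem wordCount_succ [Fintype α] (n : ℕ) (p : List α → Prop) :
    wordCount (n + 1) p = ∑ x, wordCount n (fun l => p (x :: l)) := by
  simp only [wordCount, ← Nat.card_coe_set_eq, Set.coe_ofPred]
  rw [← Nat.card_sigma]
  refine Nat.card_congr (((Fin.consEquiv fun _ => α).symm.subtypeEquiv fun w => ?_).trans
    (Equiv.subtypeProdEquivSigmaSubtype fun x t => p (x :: List.ofFn t)))
  rw [List.ofFn_succ]
  rfl

theorem wordCount_eq_add [Finite α] (n : ℕ) (p q : List α → Prop) :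
    wordCount n p = wordCount n (fun l => p l ∧ q l) + wordCount n (fun l => p l ∧ ¬ q l) := by
  simp only [wordCount, Set.ofPred_and]
  rw [← Set.ncard_inter_add_ncard_sdiff_eq_ncard _ {w : Fin n → α | q (List.ofFn w)}
    (Set.toFinite _)]
  rfl

theorem wordCount_eq_zero {n : ℕ} {p : List α → Prop} (h : ∀ l, ¬ p l) : wordCount n p = 0 := by
  simp [wordCount, h]

theorem wordCount_of_forall [Fintype α] {n : ℕ} {p : List α → Prop}
    (h : ∀ l : List α, l.length = n → p l) : wordCount n p = Fintype.card α ^ n := by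
  simp [wordCount, h]

theorem wordCount_and_prefix [Fintype α] (u : List α) (n : ℕ) (p : List α → Prop) :
    wordCount (u.length + n) (fun l => p l ∧ u <+: l) = wordCount n (fun l => p (u ++ l)) := by
  induction u generalizing p with
  | nil => simp
  | cons x u ih =>
    classical
    rw [List.length_cons, Nat.add_right_comm, wordCount_succ, Fintype.sum_eq_single x]
    · simpa using ih (fun l => p (x :: l))
    · intro y hy
      exact wordCount_eq_zero fun l ⟨_, h⟩ => hy (List.cons_prefix_cons.mp h).1.symm

end WordCount

section Avoidance

variable {α : Type*}

noncomputable def avoidCount (s t : α) (n : ℕ) : ℕ :=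
  wordCount n (fun l => ¬ [s, t, s] <:+: l)

theorem avoidCount_succ [Fintype α] [DecidableEq α] (s t : α) (n : ℕ) :
    avoidCount s t (n + 1) =
      (Fintype.card α - 1) * avoidCount s t n + wordCount n (fun l => ¬ [s, t, s] <:+: s :: l) := by
  have h_ne : ∀ x ∈ ({s}ᶜ : Finset α),
      wordCount n (fun l => ¬ [s, t, s] <:+: x :: l) = avoidCount s t n := fun x hx => by
    simp only [avoidCount, List.cons_infix_cons_of_ne (by simpa using hx)]
  rw [avoidCount, wordCount_succ, Fintype.sum_eq_add_sum_compl s, Finset.sum_congr rfl h_ne,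
    Finset.sum_const, Finset.card_compl, Finset.card_singleton, smul_eq_mul, add_comm]

theorem avoidCount_add_two [Fintype α] {s t : α} (hst : s ≠ t) (n : ℕ) :
    avoidCount s t (n + 2) = wordCount (n + 2) (fun l => ¬ [s, t, s] <:+: s :: l) +
      wordCount n (fun l => ¬ [s, t, s] <:+: s :: l) := by
  rw [avoidCount, wordCount_eq_add _ _ ([t, s] <+: ·), add_comm]
  congr 1
  · simp [List.infix_cons_iff, and_comm]
  · rw [show n + 2 = [t, s].length + n by simp [add_comm], wordCount_and_prefix]
    simp [List.cons_infix_cons_of_ne hst.symm]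

theorem avoidCount_add_three [Fintype α] {s t : α} (hst : s ≠ t) (n : ℕ) :
    avoidCount s t (n + 3) + avoidCount s t (n + 1) =
      Fintype.card α * avoidCount s t (n + 2) + (Fintype.card α - 1) * avoidCount s t n := by
  classical
  obtain ⟨k, hk⟩ : ∃ k, Fintype.card α = k + 1 :=
    Nat.exists_eq_add_one.mpr (Fintype.card_pos_iff.mpr ⟨s⟩)
  rw [avoidCount_succ _ _ (n + 2), avoidCount_succ _ _ n, avoidCount_add_two hst n, hk,
    Nat.add_sub_cancel]
  ring

theorem avoidCount_of_lt_three [Fintype α] (s t : α) {n : ℕ} (hn : n < 3) :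
    avoidCount s t n = Fintype.card α ^ n :=
  wordCount_of_forall fun l hl h => by have := h.length_le; simp at this; omega

end Avoidance

-- `3 0 3` is a palindrome, so the reading direction of the words in `NSC` is irrelevant.
theorem ncard_NSC (m : ℕ) : (NSC m).ncard = avoidCount (3 : Fin 4) 0 m := by
  rw [avoidCount, wordCount]
  congr 1
  ext c
  simp only [NSC, Set.mem_ofPred_eq, triple_infix_ofFn_iff]
  grind

theorem ncard_NSC_add_three (n : ℕ) :
    ((NSC (n + 3)).ncard : ℚ) =
      4 * (NSC (n + 2)).ncard - (NSC (n + 1)).ncard + 3 * (NSC n).ncard := by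
  have h := avoidCount_add_three (show (3 : Fin 4) ≠ 0 by decide) n
  simp only [Fintype.card_fin, Nat.add_one_sub_one] at h
  qify at h
  simp only [ncard_NSC]
  linear_combination h

theorem stmt14 (f : ℤ → ℚ)
    (hb1 : f (-1) = 1 / 3) (hb0 : f 0 = 1) (hb : f 1 = 4)
    (hrec : ∀ k : ℤ, 2 ≤ k → f k = 4 * f (k - 1) - f (k - 2) + 3 * f (k - 3)) :
    ∀ m : ℕ, 1 ≤ m → ((NSC m).ncard : ℚ) = f m := by
  let E : LinearRecurrence ℚ := ⟨3, ![3, -1, 4]⟩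
  have isSolution_iff (u : ℕ → ℚ) :
      E.IsSolution u ↔ ∀ n, u (n + 3) = 4 * u (n + 2) - u (n + 1) + 3 * u n := by
    refine forall_congr' fun n => ?_
    simp only [E, Fin.sum_univ_three, Fin.val_zero, Fin.val_one, Fin.val_two, Matrix.cons_val_zero,
      Matrix.cons_val_one, Matrix.cons_val_two, Matrix.tail_cons, Matrix.head_cons, Nat.add_zero]
    constructor <;> intro h <;> linear_combination h
  have hf : E.IsSolution (fun n => f n) := (isSolution_iff _).mpr fun n => by
    rw [hrec _ (by omega)]
    push_cast
    ring_nf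
  have hNSC : E.IsSolution (fun n => ((NSC n).ncard : ℚ)) :=
    (isSolution_iff _).mpr ncard_NSC_add_three
  have hf2 : f 2 = 16 := by
    rw [hrec 2 le_rfl]
    norm_num [hb1, hb0, hb]
  have h_init : Set.EqOn (fun n => ((NSC n).ncard : ℚ)) (fun n => f n) ↑(Finset.range E.order) :=
    fun n hn => by
      simp only [E, Finset.coe_range, Set.mem_Iio] at hn
      interval_cases n <;> simp [ncard_NSC, avoidCount_of_lt_three, hb0, hb, hf2]
  intro m _
  exact congrFun ((E.eq_iff_eqOn_range_order _ _ hNSC hf).mpr h_init) m
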